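/- Let D and D* be bounded open sets in ℝ² and let φ : D → D* be a C¹ diffeomorphism (a bijection such that both φ and φ⁻¹ are C¹). Let 1 < p < ∞ and suppose the p-energy E_p(φ) = ∫_D (|∇u|^p + |∇v|^p) dμ is finite, where φ = (u,v). Then, writing φ⁻¹ = (U,V), one has ∫_{D*} (|U_x| + |U_y| + |V_x| + |V_y|) dμ ≤ 4 · (μ(D))^{1−1/p} · (E_p(φ))^{1/p}. In particular the 1-energy E₁(φ⁻¹) = ∫_{D*} (|∇U| + |∇V|) dμ is finite and satisfies E₁(φ⁻¹) ≤ 4 · (μ(D))^{1−1/p} · (E_p(φ))^{1/p}. -/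

import Mathlib

open scoped ENNReal
open MeasureTheory

/-- The partial derivative `∂w/∂x_i` of a real function on `ℝ²`. -/
noncomputable def pderiv2 (i : Fin 2) (w : EuclideanSpace ℝ (Fin 2) → ℝ)
    (x : EuclideanSpace ℝ (Fin 2)) : ℝ :=
  fderiv ℝ w x (EuclideanSpace.single i 1)

/-- The Euclidean norm of the gradient of a real function on `ℝ²`. -/
noncomputable def gradNorm (w : EuclideanSpace ℝ (Fin 2) → ℝ)
    (x : EuclideanSpace ℝ (Fin 2)) : ℝ :=
  Real.sqrt (pderiv2 0 w x ^ 2 + pderiv2 1 w x ^ 2)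

/-!
For a `2 × 2` matrix `M`, `M⁻¹ = adj M / det M` and `adj M` has the entries of `M` up to sign and
position, so `|det M| · ∑ |(M⁻¹)ᵢⱼ| = ∑ |Mᵢⱼ|`. Applied to `M = Dφ(x)`, `M⁻¹ = Dψ(φ x)`, the
change of variables `y = φ x` turns `∫_{D*} ∑ |∂ⱼψᵢ|` into
`∫_D |det Dφ| · ∑ |∂ⱼψᵢ ∘ φ| = ∫_D ∑ |∂ⱼφᵢ|`.
Each of the four terms `∫_D |∂ⱼφᵢ| ≤ ∫_D |∇φᵢ|` is bounded by Hölder's inequality against the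
constant `1` by `(Area D)^{1-1/p} E_p(φ)^{1/p}`.
-/

theorem Matrix.abs_det_mul_sum_abs_inv_fin_two {M : Matrix (Fin 2) (Fin 2) ℝ} (hM : M.det ≠ 0) :
    |M.det| * ∑ i, ∑ j, |M⁻¹ i j| = ∑ i, ∑ j, |M i j| := by
  have habs : |M.det| ≠ 0 := abs_ne_zero.mpr hM
  simp only [Matrix.inv_def, Matrix.adjugate_fin_two, Ring.inverse_eq_inv', Matrix.smul_apply,
    Fin.sum_univ_two, smul_eq_mul, abs_mul, abs_inv, abs_neg, Matrix.of_apply,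
    Matrix.cons_val', Matrix.cons_val_zero, Matrix.cons_val_one, Matrix.empty_val',
    Matrix.cons_val_fin_one]
  field_simp
  ring

theorem lintegral_le_measure_univ_rpow_mul_lintegral_rpow {α : Type*} [MeasurableSpace α]
    (μ : Measure α) {p : ℝ} (hp : 1 < p) {f : α → ℝ≥0∞} (hf : AEMeasurable f μ) :
    ∫⁻ x, f x ∂μ ≤ μ Set.univ ^ (1 - 1 / p) * (∫⁻ x, f x ^ p ∂μ) ^ (1 / p) := by
  have hpq : p.HolderConjugate (Real.conjExponent p) := .conjExponent hp
  have h := ENNReal.lintegral_mul_le_Lp_mul_Lq μ hpq hf aemeasurable_const (g := 1)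
  rw [one_div p, hpq.one_sub_inv, ← one_div, mul_comm]
  simpa using h

local notation "E2" => EuclideanSpace ℝ (Fin 2)

theorem pderiv2_eq_toMatrix {w : E2 → E2} {B : E2 →L[ℝ] E2} {x : E2} (hw : HasFDerivAt w B x)
    (i j : Fin 2) :
    pderiv2 j (fun y => w y i) x =
      LinearMap.toMatrix (EuclideanSpace.basisFun (Fin 2) ℝ).toBasis
        (EuclideanSpace.basisFun (Fin 2) ℝ).toBasis B i j := by
  have hwi : HasFDerivAt (fun y => w y i) ((EuclideanSpace.proj i (𝕜 := ℝ)).comp B) x :=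
    (EuclideanSpace.proj i (𝕜 := ℝ)).hasFDerivAt.comp x hw
  rw [pderiv2, hwi.fderiv, LinearMap.toMatrix_apply]
  simp

noncomputable def sumAbsPartials (w : E2 → E2) (x : E2) : ℝ :=
  ∑ i, ∑ j, |pderiv2 j (fun y => w y i) x|

theorem abs_det_mul_sumAbsPartials_of_comp_eq_id {φ ψ : E2 → E2} {B C : E2 →L[ℝ] E2} {x : E2}
    (hφ : HasFDerivAt φ B x) (hψ : HasFDerivAt ψ C (φ x)) (hCB : C.comp B = .id ℝ E2) :
    |B.det| * sumAbsPartials ψ (φ x) = sumAbsPartials φ x := by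
  simp only [sumAbsPartials, pderiv2_eq_toMatrix hφ, pderiv2_eq_toMatrix hψ]
  set b := (EuclideanSpace.basisFun (Fin 2) ℝ).toBasis
  set M := LinearMap.toMatrix b b B
  have hNM : LinearMap.toMatrix b b C * M = 1 := by
    rw [← LinearMap.toMatrix_comp, ← LinearMap.toMatrix_id b,
      ← ContinuousLinearMap.toLinearMap_comp, hCB, ContinuousLinearMap.coe_id]
  have hdet : M.det ≠ 0 :=
    right_ne_zero_of_mul_eq_one (by rw [← Matrix.det_mul, hNM, Matrix.det_one])
  rw [← Matrix.inv_eq_left_inv hNM, show B.det = M.det from (LinearMap.det_toMatrix b _).symm]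
  exact Matrix.abs_det_mul_sum_abs_inv_fin_two hdet

theorem abs_det_fderiv_mul_sumAbsPartials_of_leftInvOn {D Dstar : Set E2} (hD : IsOpen D)
    (hDstar : IsOpen Dstar) {φ ψ : E2 → E2} (hmaps : Set.MapsTo φ D Dstar)
    (hinv : Set.LeftInvOn ψ φ D)
    (hφ : DifferentiableOn ℝ φ D) (hψ : DifferentiableOn ℝ ψ Dstar) {x : E2} (hx : x ∈ D) :
    |(fderiv ℝ φ x).det| * sumAbsPartials ψ (φ x) = sumAbsPartials φ x := by
  have hφx := (hφ.differentiableAt (hD.mem_nhds hx)).hasFDerivAt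
  have hψx := (hψ.differentiableAt (hDstar.mem_nhds (hmaps hx))).hasFDerivAt
  have hid : (ψ ∘ φ) =ᶠ[nhds x] id := Filter.eventuallyEq_of_mem (hD.mem_nhds hx) hinv
  refine abs_det_mul_sumAbsPartials_of_comp_eq_id hφx hψx ?_
  exact ((hψx.comp x hφx).congr_of_eventuallyEq hid.symm).unique (hasFDerivAt_id x)

theorem setLIntegral_sumAbsPartials_eq_of_leftInvOn {D Dstar : Set E2} (hD : IsOpen D)
    (hDstar : IsOpen Dstar) {φ ψ : E2 → E2} (hbij : Set.BijOn φ D Dstar)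
    (hinv : Set.LeftInvOn ψ φ D)
    (hφ : DifferentiableOn ℝ φ D) (hψ : DifferentiableOn ℝ ψ Dstar) :
    ∫⁻ y in Dstar, ENNReal.ofReal (sumAbsPartials ψ y) =
      ∫⁻ x in D, ENNReal.ofReal (sumAbsPartials φ x) := by
  rw [← hbij.image_eq, lintegral_image_eq_lintegral_abs_det_fderiv_mul volume hD.measurableSet
    (fun x hx => (hφ.differentiableAt (hD.mem_nhds hx)).hasFDerivAt.hasFDerivWithinAt) hbij.injOn]
  refine setLIntegral_congr_fun hD.measurableSet fun x hx => ?_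
  rw [← ENNReal.ofReal_mul (abs_nonneg _),
    abs_det_fderiv_mul_sumAbsPartials_of_leftInvOn hD hDstar hbij.mapsTo hinv hφ hψ hx]

noncomputable def pEnergy (p : ℝ) (w : E2 → E2) (D : Set E2) : ℝ≥0∞ :=
  ∫⁻ x in D, ENNReal.ofReal (gradNorm (fun y => w y 0) x ^ p + gradNorm (fun y => w y 1) x ^ p)

theorem measurable_pderiv2 (j : Fin 2) (w : E2 → ℝ) : Measurable (pderiv2 j w) :=
  (ContinuousLinearMap.apply ℝ ℝ (EuclideanSpace.single j 1 : E2)).continuous.measurable.comp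
    (measurable_fderiv ℝ w)

theorem abs_pderiv2_le_gradNorm (j : Fin 2) (w : E2 → ℝ) (x : E2) :
    |pderiv2 j w x| ≤ gradNorm w x := by
  rw [gradNorm, ← Real.sqrt_sq_eq_abs]
  apply Real.sqrt_le_sqrt
  fin_cases j
  · simpa using sq_nonneg (pderiv2 1 w x)
  · simpa using sq_nonneg (pderiv2 0 w x)

theorem setLIntegral_abs_pderiv2_le {p : ℝ} (hp : 1 < p) (w : E2 → E2) (D : Set E2)
    (i j : Fin 2) :
    ∫⁻ x in D, ENNReal.ofReal |pderiv2 j (fun y => w y i) x| ≤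
      volume D ^ (1 - 1 / p) * pEnergy p w D ^ (1 / p) := by
  have hp0 : 0 ≤ p := by linarith
  have hmeas := (measurable_pderiv2 j (fun y => w y i)).abs.ennreal_ofReal
  refine (lintegral_le_measure_univ_rpow_mul_lintegral_rpow _ hp hmeas.aemeasurable).trans ?_
  rw [Measure.restrict_apply_univ]
  gcongr
  refine lintegral_mono fun x => ?_
  rw [ENNReal.ofReal_rpow_of_nonneg (abs_nonneg _) hp0]
  apply ENNReal.ofReal_le_ofReal
  have hle := Real.rpow_le_rpow (abs_nonneg _) (abs_pderiv2_le_gradNorm j (fun y => w y i) x) hp0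
  fin_cases i
  · exact hle.trans (le_add_of_nonneg_right (Real.rpow_nonneg (Real.sqrt_nonneg _) p))
  · exact hle.trans (le_add_of_nonneg_left (Real.rpow_nonneg (Real.sqrt_nonneg _) p))

theorem setLIntegral_sumAbsPartials_le {p : ℝ} (hp : 1 < p) (w : E2 → E2) (D : Set E2) :
    ∫⁻ x in D, ENNReal.ofReal (sumAbsPartials w x) ≤
      4 * volume D ^ (1 - 1 / p) * pEnergy p w D ^ (1 / p) := by
  have hmeas : ∀ i j, Measurable fun x => ENNReal.ofReal |pderiv2 j (fun y => w y i) x| :=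
    fun i j => (measurable_pderiv2 j _).abs.ennreal_ofReal
  calc ∫⁻ x in D, ENNReal.ofReal (sumAbsPartials w x)
      = ∑ i, ∑ j, ∫⁻ x in D, ENNReal.ofReal |pderiv2 j (fun y => w y i) x| := by
        simp only [sumAbsPartials]
        simp_rw [ENNReal.ofReal_sum_of_nonneg fun _ _ => Finset.sum_nonneg fun _ _ => abs_nonneg _,
          ENNReal.ofReal_sum_of_nonneg fun _ _ => abs_nonneg _]
        rw [lintegral_finsetSum _ fun i _ => Finset.measurable_sum _ fun j _ => hmeas i j]
        exact Finset.sum_congr rfl fun i _ => lintegral_finsetSum _ fun j _ => hmeas i j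
    _ ≤ ∑ _i : Fin 2, ∑ _j : Fin 2, volume D ^ (1 - 1 / p) * pEnergy p w D ^ (1 / p) := by
        gcongr with i _ j _
        exact setLIntegral_abs_pderiv2_le hp w D i j
    _ = 4 * volume D ^ (1 - 1 / p) * pEnergy p w D ^ (1 / p) := by
        simp only [Finset.sum_const, Finset.card_univ, Fintype.card_fin, nsmul_eq_mul, ← mul_assoc]
        norm_num

theorem inverse_energy_general (p : ℝ) (hp : 1 < p)
    (D Dstar : Set (EuclideanSpace ℝ (Fin 2)))
    (hDo : IsOpen D) (hDso : IsOpen Dstar)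
    (hDb : Bornology.IsBounded D)
    (φ ψ : EuclideanSpace ℝ (Fin 2) → EuclideanSpace ℝ (Fin 2))
    (hbij : Set.BijOn φ D Dstar) (hinv : Set.InvOn ψ φ D Dstar)
    (hφ : ContDiffOn ℝ 1 φ D) (hψ : ContDiffOn ℝ 1 ψ Dstar)
    (hE : (∫⁻ x in D, ENNReal.ofReal
        (gradNorm (fun y => φ y 0) x ^ p + gradNorm (fun y => φ y 1) x ^ p)) ≠ ⊤) :
    (∫⁻ x in Dstar, ENNReal.ofReal
        (|pderiv2 0 (fun y => ψ y 0) x| + |pderiv2 1 (fun y => ψ y 0) x| +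
         |pderiv2 0 (fun y => ψ y 1) x| + |pderiv2 1 (fun y => ψ y 1) x|)) ≤
      ENNReal.ofReal (4 * (volume D).toReal ^ (1 - 1 / p) *
        (∫⁻ x in D, ENNReal.ofReal
          (gradNorm (fun y => φ y 0) x ^ p + gradNorm (fun y => φ y 1) x ^ p)).toReal
            ^ (1 / p)) := by
  have hvol : volume D ≠ ⊤ := hDb.measure_lt_top.ne
  have hp0 : 0 ≤ 1 / p := by positivity
  have hq0 : 0 ≤ 1 - 1 / p := by rw [sub_nonneg, div_le_one] <;> linarith
  calc _ = ∫⁻ y in Dstar, ENNReal.ofReal (sumAbsPartials ψ y) := by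
        simp only [sumAbsPartials, Fin.sum_univ_two, add_assoc]
    _ = ∫⁻ x in D, ENNReal.ofReal (sumAbsPartials φ x) :=
        setLIntegral_sumAbsPartials_eq_of_leftInvOn hDo hDso hbij hinv.1
          (hφ.differentiableOn one_ne_zero) (hψ.differentiableOn one_ne_zero)
    _ ≤ 4 * volume D ^ (1 - 1 / p) * pEnergy p φ D ^ (1 / p) :=
        setLIntegral_sumAbsPartials_le hp φ D
    _ = _ := by
        rw [ENNReal.ofReal_mul (by positivity), ENNReal.ofReal_mul (by norm_num),
          ENNReal.toReal_rpow, ENNReal.toReal_rpow,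
          ENNReal.ofReal_toReal (ENNReal.rpow_ne_top_of_nonneg hq0 hvol),
          ENNReal.ofReal_toReal (ENNReal.rpow_ne_top_of_nonneg hp0 hE), ENNReal.ofReal_ofNat]
        rfl

/-- **Energy of the inverse**: let `φ : D → D*` be a `C¹` diffeomorphism between bounded
planar domains, `φ = (u,v)`, `φ⁻¹ = (U,V)`, and let `1 < p < ∞`.  If the `p`-energy
`E_p(φ) = ∫_D (|∇u|^p + |∇v|^p)` is finite, then
`E₁(φ⁻¹) = ∫_{D*} (|U_x| + |U_y| + |V_x| + |V_y|) ≤ 4 · (Area D)^{1-1/p} · E_p(φ)^{1/p}`;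
in particular `E₁(φ⁻¹)` is finite. -/
theorem inverse_energy (p : ℝ) (hp : 1 < p)
    (D Dstar : Set (EuclideanSpace ℝ (Fin 2)))
    (hDo : IsOpen D) (hDso : IsOpen Dstar)
    (hDb : Bornology.IsBounded D) (hDsb : Bornology.IsBounded Dstar)
    (φ ψ : EuclideanSpace ℝ (Fin 2) → EuclideanSpace ℝ (Fin 2))
    (hbij : Set.BijOn φ D Dstar) (hinv : Set.InvOn ψ φ D Dstar)
    (hφ : ContDiffOn ℝ 1 φ D) (hψ : ContDiffOn ℝ 1 ψ Dstar)
    (hE : (∫⁻ x in D, ENNReal.ofReal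
        (gradNorm (fun y => φ y 0) x ^ p + gradNorm (fun y => φ y 1) x ^ p)) ≠ ⊤) :
    (∫⁻ x in Dstar, ENNReal.ofReal
        (|pderiv2 0 (fun y => ψ y 0) x| + |pderiv2 1 (fun y => ψ y 0) x| +
         |pderiv2 0 (fun y => ψ y 1) x| + |pderiv2 1 (fun y => ψ y 1) x|)) ≤
      ENNReal.ofReal (4 * (volume D).toReal ^ (1 - 1 / p) *
        (∫⁻ x in D, ENNReal.ofReal
          (gradNorm (fun y => φ y 0) x ^ p + gradNorm (fun y => φ y 1) x ^ p)).toReal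
            ^ (1 / p)) :=
  inverse_energy_general p hp D Dstar hDo hDso hDb φ ψ hbij hinv hφ hψ hE
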